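/- Let T be the weighted shift on l² with positive weights (a_j). If both T and its Aluthge transform Δ(T) (the weighted shift with weights sqrt(a_j a_{j+1})) are 2-isometries, then T is an isometry (a_j = 1 for all j); in particular T = Δ(T) = M(T). -/

import Mathlib

noncomputable section

/-- The Hilbert space `ℓ²(ℕ, ℂ)`. -/
abbrev Ell2 := lp (fun _ : ℕ => ℂ) 2

/-- The canonical orthonormal basis of `ℓ²` (indexed from `0`; the paper's index `j ≥ 1`
corresponds to our index `j - 1`). -/
noncomputable def e (j : ℕ) : Ell2 := lp.single 2 j 1

/-- `T` is an `m`-isometry: `∑_{k=0}^m (-1)^k C(m,k) ‖T^k x‖² = 0` for all `x`. -/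
def IsMIsometry (T : Ell2 →L[ℂ] Ell2) (m : ℕ) : Prop :=
  ∀ x : Ell2,
    ∑ k ∈ Finset.range (m + 1), (-1 : ℝ) ^ k * (m.choose k : ℝ) * ‖(T ^ k) x‖ ^ 2 = 0

/-!
For a weighted shift with weights `v`, testing the 2-isometry identity on `e j` gives
`v_j² v_{j+1}² - 2 v_j² + 1 = 0`. Applied to `T` and to its Aluthge transform, this gives three
polynomial relations between `w₀, w₁, w₂` which force `(w₀ w₁ - 1)⁴ = 0`; hence `w₀ = 1`, and
the relation for `T` then propagates `w_j = 1` along the sequence.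
-/

theorem HilbertBasis.norm_map_eq_of_orthonormal {ι 𝕜 E F : Type*} [RCLike 𝕜]
    [NormedAddCommGroup E] [InnerProductSpace 𝕜 E] [NormedAddCommGroup F] [InnerProductSpace 𝕜 F]
    [CompleteSpace F] (b : HilbertBasis ι 𝕜 E) {T : E →L[𝕜] F} (hT : Orthonormal 𝕜 (T ∘ b))
    (x : E) : ‖T x‖ = ‖x‖ := by
  have hTx : HasSum (fun i => b.repr x i • T (b i)) (T x) := by
    simpa using (b.hasSum_repr x).mapL T
  have hrepr : HasSum (fun i => b.repr x i • T (b i))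
      (hT.orthogonalFamily.linearIsometry (b.repr x)) := by
    simpa using hT.orthogonalFamily.hasSum_linearIsometry (b.repr x)
  rw [hTx.unique hrepr, LinearIsometry.norm_map, b.repr.norm_map]

theorem coe_default_hilbertBasis : ⇑(default : HilbertBasis ℕ ℂ Ell2) = e :=
  funext fun j => (HilbertBasis.repr_symm_single default j).symm

theorem orthonormal_e : Orthonormal ℂ e :=
  coe_default_hilbertBasis ▸ HilbertBasis.orthonormal default

theorem ext_e {F : Type*} [AddCommMonoid F] [Module ℂ F] [TopologicalSpace F] [T2Space F]
    {A B : Ell2 →L[ℂ] F} (h : ∀ j, A (e j) = B (e j)) : A = B :=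
  lp.ext_continuousLinearMap ENNReal.ofNat_ne_top fun j =>
    ContinuousLinearMap.ext_ring (h j)

def IsWeightedShift (T : Ell2 →L[ℂ] Ell2) (v : ℕ → ℝ) : Prop :=
  ∀ j, T (e j) = ((v j : ℝ) : ℂ) • e (j + 1)

namespace IsWeightedShift

variable {T : Ell2 →L[ℂ] Ell2} {v : ℕ → ℝ}

theorem unique {S : Ell2 →L[ℂ] Ell2} (hT : IsWeightedShift T v) (hS : IsWeightedShift S v) :
    T = S :=
  ext_e fun j => (hT j).trans (hS j).symm

theorem pow_apply_e (hT : IsWeightedShift T v) (k j : ℕ) :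
    (T ^ k) (e j) = ((∏ i ∈ Finset.range k, v (j + i) : ℝ) : ℂ) • e (j + k) := by
  induction k with
  | zero => simp
  | succ k ih =>
    rw [pow_succ', mul_apply_eq_comp, ih, map_smul, hT, smul_smul,
      Finset.prod_range_succ, ← add_assoc, Complex.ofReal_mul, mul_comm]

theorem norm_pow_apply_e (hT : IsWeightedShift T v) (k j : ℕ) :
    ‖(T ^ k) (e j)‖ = |∏ i ∈ Finset.range k, v (j + i)| := by
  rw [hT.pow_apply_e, norm_smul, orthonormal_e.norm_eq_one, mul_one, Complex.norm_real,
    Real.norm_eq_abs]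

theorem weight_relation_of_isMIsometry_two (hT : IsWeightedShift T v) (h2 : IsMIsometry T 2)
    (j : ℕ) : v j ^ 2 * v (j + 1) ^ 2 - 2 * v j ^ 2 + 1 = 0 := by
  have h := h2 (e j)
  simp only [Finset.sum_range_succ, Finset.sum_range_zero, hT.norm_pow_apply_e, sq_abs,
    Finset.prod_range_zero, Finset.prod_range_succ, Nat.choose_zero_right, Nat.choose_self,
    Nat.choose_one_right] at h
  linear_combination h

theorem norm_apply_of_weights_eq_one (hT : IsWeightedShift T 1) (x : Ell2) : ‖T x‖ = ‖x‖ := by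
  refine (default : HilbertBasis ℕ ℂ Ell2).norm_map_eq_of_orthonormal ?_ x
  rw [coe_default_hilbertBasis]
  convert orthonormal_e.comp (· + 1) (add_left_injective 1) using 1
  funext j
  simp [hT j]

end IsWeightedShift

theorem mul_eq_one_of_two_isometry_relations {a b c : ℝ}
    (hab : a ^ 2 * b ^ 2 - 2 * a ^ 2 + 1 = 0) (hbc : b ^ 2 * c ^ 2 - 2 * b ^ 2 + 1 = 0)
    (habc : (a * b) * (b * c) - 2 * (a * b) + 1 = 0) : a * b = 1 := by
  have h : (a * b - 1) ^ 4 = 0 := by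
    linear_combination ((a * b) ^ 2 + (2 * (a * b) - 1) ^ 2) * hab + 2 * a ^ 4 * b ^ 2 * hbc
      - 2 * a ^ 2 * ((a * b) * (b * c) + 2 * (a * b) - 1) * habc
  linear_combination pow_eq_zero_iff (n := 4) (by norm_num) |>.mp h

theorem weights_eq_one_of_two_isometry_relations {w : ℕ → ℝ} (hw : ∀ j, 0 ≤ w j)
    (hT : ∀ j, w j ^ 2 * w (j + 1) ^ 2 - 2 * w j ^ 2 + 1 = 0)
    (hD : ∀ j, (w j * w (j + 1)) * (w (j + 1) * w (j + 2)) - 2 * (w j * w (j + 1)) + 1 = 0)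
    (j : ℕ) : w j = 1 := by
  have h01 := mul_eq_one_of_two_isometry_relations (hT 0) (hT 1) (hD 0)
  have hsq : ∀ j, w j ^ 2 = 1 := by
    intro j
    induction j with
    | zero => linear_combination ((w 0 * w 1 + 1) * h01 - hT 0) / 2
    | succ j ih => linear_combination hT j - (w (j + 1) ^ 2 - 2) * ih
  exact (pow_eq_one_iff_of_nonneg (hw j) two_ne_zero).mp (hsq j)

/-- if a weighted shift `T` with positive weights `(a_j)` and its Aluthge
transform `Δ(T)` (the weighted shift with weights `√(a_j a_{j+1})`) are both `2`-isometries,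
then `T` is an isometry, i.e. `a_j = 1` for all `j`; in particular `T = Δ(T) = M(T)`,
where `M(T)` is the mean transform (the weighted shift with weights `(a_j + a_{j+1})/2`). -/
theorem two_isometry_with_two_isometric_aluthge_is_isometry
    (w : ℕ → ℝ) (hw : ∀ j, 0 < w j)
    (T D M : Ell2 →L[ℂ] Ell2)
    (hT : ∀ j, T (e j) = ((w j : ℝ) : ℂ) • e (j + 1))
    (hD : ∀ j, D (e j) = ((Real.sqrt (w j * w (j + 1)) : ℝ) : ℂ) • e (j + 1))
    (hM : ∀ j, M (e j) = (((w j + w (j + 1)) / 2 : ℝ) : ℂ) • e (j + 1))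
    (h2T : IsMIsometry T 2) (h2D : IsMIsometry D 2) :
    (∀ x : Ell2, ‖T x‖ = ‖x‖) ∧ (∀ j, w j = 1) ∧ T = D ∧ T = M := by
  have hw1 : ∀ j, w j = 1 := by
    have hrelD := IsWeightedShift.weight_relation_of_isMIsometry_two hD h2D
    refine weights_eq_one_of_two_isometry_relations (fun j => (hw j).le)
      (IsWeightedShift.weight_relation_of_isMIsometry_two hT h2T) fun j => ?_
    simpa only [Real.sq_sqrt (mul_nonneg (hw _).le (hw _).le)] using hrelD j
  have hT1 : IsWeightedShift T 1 := fun j => by simp [hT j, hw1]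
  have hD1 : IsWeightedShift D 1 := fun j => by simp [hD j, hw1]
  have hM1 : IsWeightedShift M 1 := fun j => by norm_num [hM j, hw1]
  exact ⟨hT1.norm_apply_of_weights_eq_one, hw1, hT1.unique hD1, hT1.unique hM1⟩
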